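/- arXiv:2303.14049 — 2 statements merged into one kernel-verified Lean document; each statement's English description precedes it below -/
import Mathlib

section
/- In a weakly Markov category, every morphism f : X → Y is equivalent (i.e., in the same orbit under the action of the group C(X,I)) to a unique discardable morphism, namely its normalisation n_f = m_f⁻¹ · f, where m_f = del_Y ∘ f is the mass of f. -/
open CategoryTheory MonoidalCategory

universe v u

/-- A gs-monoidal category: a symmetric monoidal category in which every
object carries a commutative comonoid structure (copy, discard), compatible
with the monoidal structure. -/
class GSMonoidal (C : Type u) [Category.{v} C] [MonoidalCategory C]
    [SymmetricCategory C] where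
  copy : ∀ X : C, X ⟶ X ⊗ X
  del : ∀ X : C, X ⟶ 𝟙_ C
  copy_del_left : ∀ X : C, copy X ≫ (del X ▷ X) ≫ (λ_ X).hom = 𝟙 X
  copy_del_right : ∀ X : C, copy X ≫ (X ◁ del X) ≫ (ρ_ X).hom = 𝟙 X
  copy_assoc : ∀ X : C,
    copy X ≫ (copy X ▷ X) ≫ (α_ X X X).hom = copy X ≫ (X ◁ copy X)
  copy_comm : ∀ X : C, copy X ≫ (β_ X X).hom = copy X
  copy_tensor : ∀ X Y : C,
    copy (X ⊗ Y) = (copy X ⊗ₘ copy Y) ≫ tensorμ X X Y Y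
  del_tensor : ∀ X Y : C, del (X ⊗ Y) = (del X ⊗ₘ del Y) ≫ (λ_ (𝟙_ C)).hom
  copy_unit : copy (𝟙_ C) = (λ_ (𝟙_ C)).inv
  del_unit : del (𝟙_ C) = 𝟙 (𝟙_ C)

namespace GSMonoidal

variable {C : Type u} [Category.{v} C] [MonoidalCategory C]
  [SymmetricCategory C] [GSMonoidal C]

/-- The convolution product on effects `a b : X ⟶ I`:
`(a, b) ↦ copy_X ≫ (a ⊗ b) ≫ (I ⊗ I ≅ I)`. -/
def emul {X : C} (a b : X ⟶ 𝟙_ C) : X ⟶ 𝟙_ C :=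
  copy X ≫ (a ⊗ₘ b) ≫ (λ_ (𝟙_ C)).hom

/-- The action of the effect monoid `C(X, I)` on the hom-set `C(X, Y)`:
`a · f = copy_X ≫ (a ⊗ f) ≫ (λ_ Y)`. -/
def act {X Y : C} (a : X ⟶ 𝟙_ C) (f : X ⟶ Y) : X ⟶ Y :=
  copy X ≫ (a ⊗ₘ f) ≫ (λ_ Y).hom

end GSMonoidal

/-- A weakly Markov category: a gs-monoidal category in which every effect
monoid `C(X, I)` is a group. -/
class WeaklyMarkov (C : Type u) [Category.{v} C] [MonoidalCategory C]
    [SymmetricCategory C] extends GSMonoidal C where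
  einv : ∀ {X : C}, (X ⟶ 𝟙_ C) → (X ⟶ 𝟙_ C)
  emul_einv : ∀ {X : C} (a : X ⟶ 𝟙_ C), GSMonoidal.emul a (einv a) = del X
  einv_emul : ∀ {X : C} (a : X ⟶ 𝟙_ C), GSMonoidal.emul (einv a) a = del X

/-!
The effects `X ⟶ I` form a monoid under `emul` with unit `del X`, and the mass
`f ≫ del Y` is equivariant: the mass of `a · f` is `a` times the mass of `f`.
Hence `m_f⁻¹ · f` has mass `m_f⁻¹ m_f = 1`, i.e. it is discardable, and if `a · f`
is discardable then `a m_f = 1`, which forces `a = m_f⁻¹` by uniqueness of inverses.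
-/

namespace GSMonoidal

variable {C : Type u} [Category.{v} C] [MonoidalCategory C]
  [SymmetricCategory C] [GSMonoidal C]

lemma emul_del_left {X : C} (a : X ⟶ 𝟙_ C) : emul (del X) a = a := by
  rw [emul, MonoidalCategory.tensorHom_def]
  slice_lhs 3 4 => rw [leftUnitor_naturality]
  slice_lhs 1 3 => rw [copy_del_left]
  simp

lemma emul_del_right {X : C} (a : X ⟶ 𝟙_ C) : emul a (del X) = a := by
  rw [emul, tensorHom_def', unitors_equal]
  slice_lhs 3 4 => rw [rightUnitor_naturality]
  slice_lhs 1 3 => rw [copy_del_right]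
  simp

lemma emul_assoc {X : C} (a b c : X ⟶ 𝟙_ C) :
    emul (emul a b) c = emul a (emul b c) := by
  have copy_assoc_inv :
      copy X ≫ (copy X ▷ X) = copy X ≫ (X ◁ copy X) ≫ (α_ X X X).inv := by
    rw [← cancel_mono (α_ X X X).hom]
    simp [copy_assoc]
  have unitor_coherence :
      (α_ (𝟙_ C) (𝟙_ C) (𝟙_ C)).inv ≫ ((λ_ (𝟙_ C)).hom ▷ 𝟙_ C) ≫ (λ_ (𝟙_ C)).hom =
        (𝟙_ C ◁ (λ_ (𝟙_ C)).hom) ≫ (λ_ (𝟙_ C)).hom := by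
    monoidal_coherence
  rw [emul, emul, emul, emul,
    MonoidalCategory.tensorHom_def (copy X ≫ (a ⊗ₘ b) ≫ (λ_ (𝟙_ C)).hom) c,
    tensorHom_def' a (copy X ≫ (b ⊗ₘ c) ≫ (λ_ (𝟙_ C)).hom)]
  simp only [comp_whiskerRight, whiskerLeft_comp, Category.assoc]
  slice_lhs 4 5 => rw [← whisker_exchange]
  slice_rhs 4 5 => rw [whisker_exchange]
  slice_lhs 3 4 => rw [← MonoidalCategory.tensorHom_def]
  slice_rhs 3 4 => rw [← tensorHom_def']
  slice_lhs 1 2 => rw [copy_assoc_inv]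
  slice_lhs 3 4 => rw [← associator_inv_naturality]
  simp only [Category.assoc]
  slice_lhs 4 6 => rw [unitor_coherence]

lemma act_comp_del {X Y : C} (a : X ⟶ 𝟙_ C) (f : X ⟶ Y) :
    act a f ≫ del Y = emul a (f ≫ del Y) := by
  simp only [act, emul, Category.assoc, ← leftUnitor_naturality, tensorHom_comp_whiskerLeft_assoc]

end GSMonoidal

namespace WeaklyMarkov

open GSMonoidal

variable {C : Type u} [Category.{v} C] [MonoidalCategory C]
  [SymmetricCategory C] [WeaklyMarkov C]

lemma eq_einv_of_emul_eq_del {X : C} {a b : X ⟶ 𝟙_ C} (h : emul a b = del X) : a = einv b :=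
  calc a = emul a (emul b (einv b)) := by rw [emul_einv, emul_del_right]
    _ = einv b := by rw [← emul_assoc, h, emul_del_left]

end WeaklyMarkov

open GSMonoidal WeaklyMarkov in
/-- In a weakly Markov category, every morphism `f : X ⟶ Y` is equivalent
(in the same orbit under the action of the group `C(X, I)`) to a unique
discardable morphism, namely its normalisation `n_f = m_f⁻¹ · f`, where
`m_f = del_Y ∘ f` is the mass of `f`. -/
theorem stmt9 {C : Type u} [Category.{v} C] [MonoidalCategory C]
    [SymmetricCategory C] [WeaklyMarkov C] {X Y : C} (f : X ⟶ Y) :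
    (act (einv (f ≫ del Y)) f) ≫ del Y = del X ∧
    (∃ a : X ⟶ 𝟙_ C, act a f = act (einv (f ≫ del Y)) f) ∧
    (∀ d : X ⟶ Y, d ≫ del Y = del X → (∃ a : X ⟶ 𝟙_ C, act a f = d) →
      d = act (einv (f ≫ del Y)) f) := by
  refine ⟨by rw [act_comp_del, einv_emul], ⟨einv (f ≫ del Y), rfl⟩, ?_⟩
  rintro d hd ⟨a, rfl⟩
  rw [act_comp_del] at hd
  rw [eq_einv_of_emul_eq_del hd]
end

section
/- Localised independence: in a weakly Markov category, if f : A → X ⊗ Y ⊗ Z exhibits conditional independence of X ⊗ Y and Z given A, and also conditional independence of X and Y ⊗ Z given A, then f exhibits conditional independence of X, Y, and Z given A (i.e., f is equivalent to the product of its three single-output marginals). -/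
/-!
Discarding `Z` from both factorisations of `f` computes the `X ⊗ Y`-marginal in two ways:
from `f = copy ≫ (g ⊗ h)` it is `g` acted on by the effect `h ≫ del Z`, and from the
second factorisation it is a copy-product of a morphism into `X` and one into `Y`.
Since effects are invertible in a weakly Markov category, `g` itself is such a
copy-product, and substituting it into `f = copy ≫ (g ⊗ h)` splits `f` three ways.
-/

open CategoryTheory MonoidalCategory

universe v u

namespace GSMonoidal

variable {C : Type u} [Category.{v} C] [MonoidalCategory C]
  [SymmetricCategory C] [GSMonoidal C]

def discardRight (Y Z : C) : Y ⊗ Z ⟶ Y :=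
  (Y ◁ del Z) ≫ (ρ_ Y).hom

lemma act_comp {X Y W : C} (a : X ⟶ 𝟙_ C) (k : X ⟶ Y) (m : Y ⟶ W) :
    act a (k ≫ m) = act a k ≫ m := by
  simp only [act, Category.assoc, MonoidalCategory.tensorHom_def, whiskerLeft_comp,
    leftUnitor_naturality, leftUnitor_naturality_assoc]

lemma act_del {X Y : C} (f : X ⟶ Y) : act (del X) f = f := by
  rw [act, MonoidalCategory.tensorHom_def, Category.assoc, leftUnitor_naturality,
    reassoc_of% copy_del_left X]

lemma act_copy_tensorHom {A X Y : C} (a : A ⟶ 𝟙_ C) (u : A ⟶ X) (v : A ⟶ Y) :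
    act a (copy A ≫ (u ⊗ₘ v)) = copy A ≫ (act a u ⊗ₘ v) := by
  unfold act
  calc copy A ≫ (a ⊗ₘ copy A ≫ (u ⊗ₘ v)) ≫ (λ_ (X ⊗ Y)).hom
      = copy A ≫ (A ◁ copy A) ≫ (a ⊗ₘ (u ⊗ₘ v)) ≫ (λ_ (X ⊗ Y)).hom := by
        simp only [← id_tensorHom, tensorHom_comp_tensorHom_assoc, Category.id_comp]
    _ = copy A ≫ (copy A ▷ A) ≫ ((a ⊗ₘ u) ⊗ₘ v) ≫ (α_ _ _ _).hom ≫
        (λ_ (X ⊗ Y)).hom := by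
        rw [← reassoc_of% copy_assoc A, associator_naturality_assoc]
    _ = copy A ≫ ((copy A ≫ (a ⊗ₘ u) ≫ (λ_ X).hom) ⊗ₘ v) := by
        simp only [leftUnitor_tensor_hom, Iso.hom_inv_id_assoc, ← tensorHom_id,
          tensorHom_comp_tensorHom, Category.comp_id, Category.id_comp]

lemma act_act {X Y : C} (a b : X ⟶ 𝟙_ C) (f : X ⟶ Y) :
    act a (act b f) = act (emul a b) f := by
  rw [act.eq_1 b, ← Category.assoc, act_comp, act_copy_tensorHom, Category.assoc]
  -- `act a b` and `emul a b` are the same composite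
  rfl

lemma copy_tensorHom_discardRight {A Y Z : C} (g : A ⟶ Y) (h : A ⟶ Z) :
    copy A ≫ (g ⊗ₘ h) ≫ discardRight Y Z = act (h ≫ del Z) g := by
  simp only [discardRight, ← id_tensorHom, tensorHom_comp_tensorHom_assoc, Category.comp_id]
  rw [← copy_comm, Category.assoc, ← BraidedCategory.braiding_naturality_assoc,
    braiding_rightUnitor]
  rfl

lemma associator_inv_discardRight (X Y Z : C) :
    (α_ X Y Z).inv ≫ discardRight (X ⊗ Y) Z = X ◁ discardRight Y Z := by
  rw [discardRight, discardRight, ← associator_inv_naturality_right_assoc,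
    MonoidalCategory.whiskerLeft_comp]
  monoidal

end GSMonoidal

namespace WeaklyMarkov

open GSMonoidal

variable {C : Type u} [Category.{v} C] [MonoidalCategory C]
  [SymmetricCategory C] [WeaklyMarkov C]

lemma act_einv_act {X Y : C} (a : X ⟶ 𝟙_ C) (f : X ⟶ Y) : act (einv a) (act a f) = f := by
  rw [act_act, einv_emul, act_del]

lemma eq_copy_tensorHom_of_act_eq {A X Y : C} {a : A ⟶ 𝟙_ C} {g : A ⟶ X ⊗ Y}
    {u : A ⟶ X} {v : A ⟶ Y} (h : act a g = copy A ≫ (u ⊗ₘ v)) :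
    g = copy A ≫ (act (einv a) u ⊗ₘ v) := by
  rw [← act_copy_tensorHom, ← h, act_einv_act]

end WeaklyMarkov

open GSMonoidal in
/-- Localised independence property: in a weakly Markov category, if
`f : A ⟶ (X ⊗ Y) ⊗ Z` exhibits conditional independence of `X ⊗ Y` and `Z`
given `A`, and also conditional independence of `X` and `Y ⊗ Z` given `A`,
then `f` exhibits conditional independence of `X`, `Y` and `Z` given `A`,
i.e. it is a product (via copying) of three morphisms into `X`, `Y`, `Z`
(equivalently, it is equivalent to the product of its three single-output
marginals). -/
theorem stmt18 {C : Type u} [Category.{v} C] [MonoidalCategory C]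
    [SymmetricCategory C] [WeaklyMarkov C]
    {A X Y Z : C} (f : A ⟶ (X ⊗ Y) ⊗ Z)
    (h₁ : ∃ (g : A ⟶ X ⊗ Y) (h : A ⟶ Z), f = copy A ≫ (g ⊗ₘ h))
    (h₂ : ∃ (g : A ⟶ X) (h : A ⟶ Y ⊗ Z),
      f = copy A ≫ (g ⊗ₘ h) ≫ (α_ X Y Z).inv) :
    ∃ (gX : A ⟶ X) (gY : A ⟶ Y) (gZ : A ⟶ Z),
      f = copy A ≫ ((copy A ≫ (gX ⊗ₘ gY)) ⊗ₘ gZ) := by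
  obtain ⟨g, h, hf₁⟩ := h₁
  obtain ⟨g', h', hf₂⟩ := h₂
  have marginal : act (h ≫ del Z) g = copy A ≫ (g' ⊗ₘ h' ≫ discardRight Y Z) :=
    calc act (h ≫ del Z) g = f ≫ discardRight (X ⊗ Y) Z := by
          rw [hf₁, Category.assoc, copy_tensorHom_discardRight]
      _ = copy A ≫ (g' ⊗ₘ h' ≫ discardRight Y Z) := by
          rw [hf₂, Category.assoc, Category.assoc, associator_inv_discardRight,
            ← id_tensorHom, tensorHom_comp_tensorHom, Category.comp_id]
  exact ⟨act (WeaklyMarkov.einv (h ≫ del Z)) g', h' ≫ discardRight Y Z, h,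
    by rw [hf₁, WeaklyMarkov.eq_copy_tensorHom_of_act_eq marginal]⟩
end
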